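/- Let Φ be a completely positive trace-preserving linear map on d×d complex matrices. If there exist d×d matrices A_1, …, A_N with N < d such that Φ(ρ) = Σ_{k=1}^N A_k ρ A_k† for all ρ, then Φ is not entanglement breaking. (Theorem 4.) -/

import Mathlib

open Matrix Kronecker BigOperators ComplexOrder

noncomputable section

/-- Blockwise action of `I_n ⊗ Φ` on matrices indexed by `Fin n × Fin d`. -/
def tensorId (n : ℕ) {d e : ℕ}
    (Φ : Matrix (Fin d) (Fin d) ℂ → Matrix (Fin e) (Fin e) ℂ)
    (Γ : Matrix (Fin n × Fin d) (Fin n × Fin d) ℂ) :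
    Matrix (Fin n × Fin e) (Fin n × Fin e) ℂ :=
  fun p q => Φ (fun a b => Γ (p.1, a) (q.1, b)) p.2 q.2

/-- A matrix indexed by `Fin n × Fin d` is separable if it is a finite sum of Kronecker
products of positive semidefinite matrices. -/
def IsSeparableMat {n d : ℕ} (Γ : Matrix (Fin n × Fin d) (Fin n × Fin d) ℂ) : Prop :=
  ∃ (N : ℕ) (A : Fin N → Matrix (Fin n) (Fin n) ℂ)
    (B : Fin N → Matrix (Fin d) (Fin d) ℂ),
    (∀ i, (A i).PosSemidef) ∧ (∀ i, (B i).PosSemidef) ∧ Γ = ∑ i, (A i) ⊗ₖ (B i)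

/-- A map on `d × d` matrices is entanglement breaking if `I_n ⊗ Φ` sends every
positive semidefinite matrix to a separable one. -/
def EntBreaking {d : ℕ} (Φ : Matrix (Fin d) (Fin d) ℂ → Matrix (Fin d) (Fin d) ℂ) : Prop :=
  ∀ n : ℕ, 1 ≤ n → ∀ Γ : Matrix (Fin n × Fin d) (Fin n × Fin d) ℂ,
    Γ.PosSemidef → IsSeparableMat (tensorId n Φ Γ)

/-- Complete positivity: `I_n ⊗ Φ` preserves positive semidefiniteness for all `n ≥ 1`. -/
def CompletelyPositive {d e : ℕ}
    (Φ : Matrix (Fin d) (Fin d) ℂ → Matrix (Fin e) (Fin e) ℂ) : Prop :=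
  ∀ n : ℕ, 1 ≤ n → ∀ Γ : Matrix (Fin n × Fin d) (Fin n × Fin d) ℂ,
    Γ.PosSemidef → (tensorId n Φ Γ).PosSemidef

def TracePreserving {d : ℕ}
    (Φ : Matrix (Fin d) (Fin d) ℂ → Matrix (Fin d) (Fin d) ℂ) : Prop :=
  ∀ X, (Φ X).trace = X.trace

/-- The maximally entangled state `|β⟩⟨β|`. -/
def maxEnt (d : ℕ) : Matrix (Fin d × Fin d) (Fin d × Fin d) ℂ :=
  fun p q => if p.1 = p.2 ∧ q.1 = q.2 then (1 : ℂ) / d else 0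

/-- The Choi matrix `(I_d ⊗ Φ)(|β⟩⟨β|)`. -/
def choiMatrix {d : ℕ} (Φ : Matrix (Fin d) (Fin d) ℂ → Matrix (Fin d) (Fin d) ℂ) :
    Matrix (Fin d × Fin d) (Fin d × Fin d) ℂ :=
  tensorId d Φ (maxEnt d)

/-- The rank-one matrix `|v⟩⟨v|`. -/
def rankOne {d : ℕ} (v : Fin d → ℂ) : Matrix (Fin d) (Fin d) ℂ :=
  Matrix.vecMulVec v (star v)

/-- Completely positive trace-preserving (linear) maps. -/
def IsCPTP {d : ℕ} (Φ : Matrix (Fin d) (Fin d) ℂ → Matrix (Fin d) (Fin d) ℂ) : Prop :=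
  IsLinearMap ℂ Φ ∧ CompletelyPositive Φ ∧ TracePreserving Φ

/-- EBT maps: completely positive, trace-preserving, entanglement-breaking linear maps. -/
def IsEBT {d : ℕ} (Φ : Matrix (Fin d) (Fin d) ℂ → Matrix (Fin d) (Fin d) ℂ) : Prop :=
  IsCPTP Φ ∧ EntBreaking Φ

/-- `Φ` is an extreme point of the set of maps satisfying `P`. -/
def IsExtremePointOf {d : ℕ}
    (P : (Matrix (Fin d) (Fin d) ℂ → Matrix (Fin d) (Fin d) ℂ) → Prop)
    (Φ : Matrix (Fin d) (Fin d) ℂ → Matrix (Fin d) (Fin d) ℂ) : Prop :=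
  P Φ ∧ ∀ Φ₁ Φ₂, P Φ₁ → P Φ₂ → ∀ a : ℝ, 0 < a → a < 1 →
    Φ = (fun ρ => (a : ℂ) • Φ₁ ρ + ((1 - a : ℝ) : ℂ) • Φ₂ ρ) →
    Φ₁ = Φ ∧ Φ₂ = Φ


lemma kron_conjTranspose {m n : Type*} (B : Matrix m m ℂ) (D : Matrix n n ℂ) :
    (B ⊗ₖ D)ᴴ = Bᴴ ⊗ₖ Dᴴ := by
  ext p q
  simp [conjTranspose_apply, kroneckerMap_apply, star_mul']

lemma posSemidef_kron {m n : Type*} [Fintype m] [Fintype n] [DecidableEq m] [DecidableEq n]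
    {P : Matrix m m ℂ} {Q : Matrix n n ℂ}
    (hP : P.PosSemidef) (hQ : Q.PosSemidef) : (P ⊗ₖ Q).PosSemidef := by
  exact hP.kronecker hQ

lemma mem_span_of_psd {ι : Type*} [Fintype ι] [DecidableEq ι] {κ : Type*} [Fintype κ]
    (v : κ → ι → ℂ) (X : Matrix ι ι ℂ) (hX : X.PosSemidef)
    (hXC : ∀ w : ι → ℂ, (∀ k, star (v k) ⬝ᵥ w = 0) → star w ⬝ᵥ X *ᵥ w = 0)
    (u : ι → ℂ) : X *ᵥ u ∈ Submodule.span ℂ (Set.range v) := by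
  let E := EuclideanSpace ℂ ι
  let v' : κ → E := fun k => WithLp.toLp 2 (v k)
  let S : Submodule ℂ E := Submodule.span ℂ (Set.range v')
  have key : (WithLp.toLp 2 (X *ᵥ u) : E) ∈ Sᗮᗮ := by
    rw [Submodule.mem_orthogonal]
    intro w hw
    have hwk : ∀ k, star (v k) ⬝ᵥ w = 0 := by
      intro k
      have hvk : v' k ∈ S := Submodule.subset_span ⟨k, rfl⟩
      rw [dotProduct_comm]
      exact (Submodule.mem_orthogonal S w).mp hw (v' k) hvk
    have h0 : X *ᵥ w = 0 := (hX.dotProduct_mulVec_zero_iff w).mp (hXC w hwk)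
    have hvm : star (w : ι → ℂ) ᵥ* X = 0 := by
      have := congrArg star h0
      rw [star_mulVec, hX.1] at this
      simpa using this
    rw [EuclideanSpace.inner_eq_star_dotProduct, dotProduct_comm]
    show (star (w : ι → ℂ)) ⬝ᵥ (X *ᵥ u) = 0
    rw [dotProduct_mulVec, hvm, zero_dotProduct]
  rw [Submodule.orthogonal_orthogonal] at key
  obtain ⟨c, hc⟩ := (Submodule.mem_span_range_iff_exists_fun ℂ).mp key
  refine (Submodule.mem_span_range_iff_exists_fun ℂ).mpr ⟨c, ?_⟩
  have := congrArg WithLp.ofLp hc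
  simpa [v'] using this

lemma linearIndependent_mul_fun {ι1 ι2 β : Type*} [Fintype ι1] [Fintype ι2] [Fintype β]
    (x : β → ι1 → ℂ) (y : β → ι2 → ℂ) (hx : LinearIndependent ℂ x) (hy : ∀ m, y m ≠ 0) :
    LinearIndependent ℂ (fun m => fun p : ι1 × ι2 => x m p.1 * y m p.2) := by
  rw [Fintype.linearIndependent_iff] at hx ⊢
  intro c hc m
  have h1 : ∀ p : ι1 × ι2, ∑ m', c m' * (x m' p.1 * y m' p.2) = 0 := by
    intro p
    have := congrFun hc p
    simpa [Finset.sum_apply] using this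
  have h2 : ∑ m', (c m' * (y m' ⬝ᵥ star (y m))) • x m' = 0 := by
    funext q1
    simp only [Finset.sum_apply, Pi.smul_apply, smul_eq_mul, Pi.zero_apply]
    have hz : ∀ q2, (∑ m', c m' * (x m' q1 * y m' q2)) = 0 := fun q2 => h1 (q1, q2)
    calc ∑ m', (c m' * (y m' ⬝ᵥ star (y m))) * x m' q1
        = ∑ m', ∑ q2, (c m' * (x m' q1 * y m' q2)) * star (y m q2) := by
          refine Finset.sum_congr rfl fun m' _ => ?_
          rw [dotProduct, Finset.mul_sum, Finset.sum_mul]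
          refine Finset.sum_congr rfl fun q2 _ => ?_
          simp only [Pi.star_apply]
          ring
      _ = ∑ q2, (∑ m', c m' * (x m' q1 * y m' q2)) * star (y m q2) := by
          rw [Finset.sum_comm]
          exact Finset.sum_congr rfl fun q2 _ => (Finset.sum_mul _ _ _).symm
      _ = 0 := by simp [hz]
  have := hx _ h2 m
  rcases mul_eq_zero.mp this with h | h
  · exact h
  · exact absurd ((dotProduct_self_star_eq_zero).mp h) (hy m)

lemma maxEnt_posSemidef (d : ℕ) : (maxEnt d).PosSemidef := by
  refine Matrix.PosSemidef.of_dotProduct_mulVec_nonneg ?_ ?_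
  · ext p q
    simp only [conjTranspose_apply, maxEnt]
    rw [apply_ite star]
    simp [and_comm]
  · intro x
    have hmv : ∀ p : Fin d × Fin d,
        (maxEnt d *ᵥ x) p = if p.1 = p.2 then (1/(d:ℂ)) * ∑ i, x (i, i) else 0 := by
      intro p
      show (∑ q : Fin d × Fin d, maxEnt d p q * x q) = _
      rw [Fintype.sum_prod_type]
      by_cases hp : p.1 = p.2
      · simp only [maxEnt, hp, eq_self_iff_true, true_and, if_pos, ite_mul, zero_mul,
          Finset.sum_ite_eq, Finset.mem_univ, if_true]
        rw [Finset.mul_sum]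
      · simp [maxEnt, hp]
    have : star x ⬝ᵥ (maxEnt d *ᵥ x) =
        (1/(d:ℂ)) * (star (∑ i, x (i, i)) * ∑ i, x (i, i)) := by
      rw [dotProduct, Fintype.sum_prod_type]
      simp only [hmv, Pi.star_apply, mul_ite, mul_zero, Finset.sum_ite_eq,
        Finset.mem_univ, if_true]
      simp only [star_sum, Finset.sum_mul, Finset.mul_sum]
      rw [Finset.sum_comm]
      refine Finset.sum_congr rfl fun i _ => Finset.sum_congr rfl fun j _ => by ring
    rw [this]
    have h1 : (0:ℂ) ≤ 1/(d:ℂ) := by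
      rw [show (1/(d:ℂ)) = (((1/(d:ℝ)) : ℝ) : ℂ) by push_cast; ring]
      exact Complex.zero_le_real.mpr (by positivity)
    exact mul_nonneg h1 (star_mul_self_nonneg _)

lemma sum_mulVec' {ι β : Type*} [Fintype ι] [Fintype β] (M : β → Matrix ι ι ℂ) (w : ι → ℂ) :
    (∑ t, M t) *ᵥ w = ∑ t, M t *ᵥ w := by
  funext p
  simp only [mulVec, dotProduct, Finset.sum_apply, Matrix.sum_apply, Finset.sum_mul]
  exact Finset.sum_comm

/-- Theorem 4: a CPT map admitting a Kraus representation with fewer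
than `d` Kraus operators is not entanglement breaking. -/
theorem few_kraus_operators_not_entanglement_breaking
    {d : ℕ} (N : ℕ) (hN : N < d)
    (Φ : Matrix (Fin d) (Fin d) ℂ →ₗ[ℂ] Matrix (Fin d) (Fin d) ℂ)
    (hcp : CompletelyPositive (fun ρ => Φ ρ))
    (htp : TracePreserving (fun ρ => Φ ρ))
    (A : Fin N → Matrix (Fin d) (Fin d) ℂ)
    (hA : ∀ ρ, Φ ρ = ∑ k, A k * ρ * (A k)ᴴ) :
    ¬ EntBreaking (fun ρ => Φ ρ) := by
  intro hEB
  classical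
  have hd : 0 < d := Nat.lt_of_le_of_lt (Nat.zero_le N) hN
  have hd1 : 1 ≤ d := hd
  have hdC : (d:ℂ) ≠ 0 := Nat.cast_ne_zero.mpr hd.ne'
  set Ψ : Matrix (Fin d) (Fin d) ℂ → Matrix (Fin d) (Fin d) ℂ := fun ρ => Φ ρ with hΨ
  set C : Matrix (Fin d × Fin d) (Fin d × Fin d) ℂ := tensorId d Ψ (maxEnt d) with hCdef
  obtain ⟨M, P, Q, hP, hQ, hsum⟩ := hEB d hd1 (maxEnt d) (maxEnt_posSemidef d)
  -- entries of the Choi matrix via the Kraus representation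
  have hCk : ∀ (i a j b : Fin d),
      C (i,a) (j,b) = ∑ k, A k a i * ((1/(d:ℂ)) * star (A k b j)) := by
    intro i a j b
    have hX : (fun a' b' => maxEnt d (i,a') (j,b')) = Matrix.single i j (1/(d:ℂ)) := by
      ext a' b'
      simp [maxEnt, Matrix.single]
    show Ψ (fun a' b' => maxEnt d (i,a') (j,b')) a b = _
    rw [hX, hΨ]
    simp only [hA]
    rw [Matrix.sum_apply]
    refine Finset.sum_congr rfl fun k _ => ?_
    simp only [Matrix.mul_apply, Matrix.single, Matrix.conjTranspose_apply,
      Matrix.of_apply, ite_and, mul_ite, ite_mul, mul_zero, zero_mul,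
      Finset.sum_ite_eq, Finset.mem_univ, if_true]
    ring
  -- partial trace of the Choi matrix, using trace preservation
  have hPT : ∀ i j : Fin d, ∑ a, C (i,a) (j,a) = if i = j then 1/(d:ℂ) else 0 := by
    intro i j
    have h1 : ∑ a, C (i,a) (j,a) = (Ψ (fun a' b' => maxEnt d (i,a') (j,b'))).trace := by
      rw [Matrix.trace]
      rfl
    rw [h1]
    refine (htp _).trans ?_
    unfold Matrix.trace
    by_cases h : i = j
    · subst h
      simp [Matrix.diag, maxEnt]
    · rw [if_neg h]
      refine Finset.sum_eq_zero fun a _ => ?_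
      have : ¬(i = a ∧ j = a) := by rintro ⟨rfl, rfl⟩; exact h rfl
      simp [Matrix.diag, maxEnt, this]
  have hCE : ∀ p q : Fin d × Fin d, C p q = ∑ t, P t p.1 q.1 * Q t p.2 q.2 := by
    intro p q
    rw [hCdef, hsum, Matrix.sum_apply]
    rfl
  have hI : ∀ i j : Fin d, ∑ t, P t i j * (Q t).trace = if i = j then 1/(d:ℂ) else 0 := by
    intro i j
    rw [← hPT i j]
    calc ∑ t, P t i j * (Q t).trace = ∑ t, ∑ a, P t i j * Q t a a := by
          refine Finset.sum_congr rfl fun t _ => ?_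
          rw [Matrix.trace, Finset.mul_sum]
          rfl
      _ = ∑ a, ∑ t, P t i j * Q t a a := Finset.sum_comm
      _ = ∑ a, C (i,a) (j,a) := by
          refine Finset.sum_congr rfl fun a _ => ?_
          rw [hCE (i,a) (j,a)]
  -- the span of the (transposed-reshaped) Kraus operators
  set v : Fin N → (Fin d × Fin d → ℂ) := fun k p => A k p.2 p.1 with hv
  set S : Submodule ℂ (Fin d × Fin d → ℂ) := Submodule.span ℂ (Set.range v) with hSdef
  have hCw : ∀ w : Fin d × Fin d → ℂ, (∀ k, star (v k) ⬝ᵥ w = 0) → C *ᵥ w = 0 := by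
    intro w hw
    funext p
    show (∑ q : Fin d × Fin d, C p q * w q) = 0
    calc ∑ q : Fin d × Fin d, C p q * w q
        = ∑ q : Fin d × Fin d, ∑ k, v k p * ((1/(d:ℂ)) * (star (v k q) * w q)) := by
          refine Finset.sum_congr rfl fun q _ => ?_
          have := hCk p.1 p.2 q.1 q.2
          simp only [Prod.mk.eta] at this
          rw [this, Finset.sum_mul]
          refine Finset.sum_congr rfl fun k _ => ?_
          simp only [hv, Pi.star_apply]
          ring
      _ = ∑ k, v k p * ((1/(d:ℂ)) * (star (v k) ⬝ᵥ w)) := by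
          rw [Finset.sum_comm]
          refine Finset.sum_congr rfl fun k _ => ?_
          rw [dotProduct, Finset.mul_sum, Finset.mul_sum]
          simp only [Pi.star_apply]
      _ = 0 := by simp [hw]
  have hzero : ∀ w : Fin d × Fin d → ℂ, (∀ k, star (v k) ⬝ᵥ w = 0) →
      ∀ t, star w ⬝ᵥ ((P t ⊗ₖ Q t) *ᵥ w) = 0 := by
    intro w hw
    have h0 : star w ⬝ᵥ (C *ᵥ w) = 0 := by rw [hCw w hw, dotProduct_zero]
    have hsum2 : ∑ t, star w ⬝ᵥ ((P t ⊗ₖ Q t) *ᵥ w) = 0 := by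
      rw [← h0, hCdef, hsum, sum_mulVec']
      simp only [dotProduct, Finset.sum_apply, Finset.mul_sum]
      exact Finset.sum_comm
    intro t
    exact (Finset.sum_eq_zero_iff_of_nonneg
      (fun t' _ => (posSemidef_kron (hP t') (hQ t')).dotProduct_mulVec_nonneg w)).mp hsum2 t (Finset.mem_univ t)
  -- the set of useful columns
  set T : Set (Fin d → ℂ) := {x | ∃ t j, Q t ≠ 0 ∧ x = P t *ᵥ Pi.single j 1} with hTdef
  have hTfin : T.Finite := by
    apply Set.Finite.subset
      (Set.finite_range (fun tj : Fin M × Fin d => P tj.1 *ᵥ Pi.single tj.2 (1:ℂ)))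
    rintro x ⟨t, j, -, rfl⟩
    exact ⟨(t, j), rfl⟩
  have hTspan : Submodule.span ℂ T = ⊤ := by
    rw [eq_top_iff, ← (Pi.basisFun ℂ (Fin d)).span_eq, Submodule.span_le]
    rintro _ ⟨j, rfl⟩
    rw [Pi.basisFun_apply]
    have hj : Pi.single j (1:ℂ) = (d:ℂ) • ∑ t, (Q t).trace • (P t *ᵥ Pi.single j 1) := by
      funext i
      simp only [Pi.smul_apply, Finset.sum_apply, smul_eq_mul, mulVec_single_one, col_apply]
      rw [show ∑ t, (Q t).trace * P t i j = if i = j then 1/(d:ℂ) else 0 from by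
        rw [← hI i j]; exact Finset.sum_congr rfl fun t _ => mul_comm _ _]
      rw [Pi.single_apply]
      by_cases h : i = j
      · simp only [h, if_true]
        field_simp
      · simp [h]
    rw [hj]
    refine Submodule.smul_mem _ _ (Submodule.sum_mem _ fun t _ => ?_)
    by_cases hQt : Q t = 0
    · simp only [hQt, Matrix.trace_zero, zero_smul]
      exact Submodule.zero_mem _
    · exact Submodule.smul_mem _ _ (Submodule.subset_span ⟨t, j, hQt, rfl⟩)
  -- every useful column pairs with a nonzero vector into S
  have hmemS : ∀ x ∈ T, ∃ y : Fin d → ℂ, y ≠ 0 ∧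
      (fun p : Fin d × Fin d => x p.1 * y p.2) ∈ S := by
    rintro x ⟨t, j, hQt, rfl⟩
    obtain ⟨b, hb⟩ : ∃ b, Q t *ᵥ Pi.single b (1:ℂ) ≠ 0 := by
      by_contra h
      push_neg at h
      apply hQt
      ext a b
      have := congrFun (h b) a
      simpa [mulVec_single] using this
    refine ⟨Q t *ᵥ Pi.single b 1, hb, ?_⟩
    have hmem := mem_span_of_psd v (P t ⊗ₖ Q t) (posSemidef_kron (hP t) (hQ t))
      (fun w hw => hzero w hw t) (Pi.single (j,b) 1)
    have heq : (P t ⊗ₖ Q t) *ᵥ Pi.single (j,b) (1:ℂ) =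
        fun p : Fin d × Fin d =>
          (P t *ᵥ Pi.single j 1) p.1 * (Q t *ᵥ Pi.single b 1) p.2 := by
      funext p
      simp [mulVec_single, Matrix.kroneckerMap_apply]
    rw [heq] at hmem
    exact hmem
  -- extract a basis from T
  obtain ⟨bset, hbT, hbspan, hbind⟩ := exists_linearIndependent ℂ T
  haveI : Fintype bset := (hTfin.subset hbT).fintype
  have hbtop : ⊤ ≤ Submodule.span ℂ (Set.range ((↑) : bset → (Fin d → ℂ))) := by
    rw [Subtype.range_coe, hbspan, hTspan]
  have hcard : Fintype.card bset = d := by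
    have h1 := Module.finrank_eq_card_basis (Module.Basis.mk hbind hbtop)
    rw [Module.finrank_fin_fun] at h1
    exact h1.symm
  choose y hy0 hyS using fun x : bset => hmemS x (hbT x.2)
  have hind2 : LinearIndependent ℂ
      (fun x : bset => fun p : Fin d × Fin d => (x : Fin d → ℂ) p.1 * y x p.2) :=
    linearIndependent_mul_fun _ y hbind hy0
  have hgind : LinearIndependent ℂ (fun x : bset =>
      (⟨fun p : Fin d × Fin d => (x : Fin d → ℂ) p.1 * y x p.2, hyS x⟩ : S)) :=
    LinearIndependent.of_comp S.subtype hind2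
  have hle1 : Fintype.card bset ≤ Module.finrank ℂ S := hgind.fintype_card_le_finrank
  have hle2 : Module.finrank ℂ S ≤ N := by
    refine le_trans (finrank_span_le_card (Set.range v)) ?_
    rw [Set.toFinset_range]
    exact le_trans Finset.card_image_le (by simp)
  rw [hcard] at hle1
  exact absurd (hle1.trans hle2) (Nat.not_le.mpr hN)
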